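/- arXiv:1103.3986 — 2 statements merged into one kernel-verified Lean document; each statement's English description precedes it below -/
import Mathlib

section
/- For every integer k ≥ 4, setting ℓ = ⌊√k / 2⌋, one has the inequality (2k/(k + 2ℓ + 1)) · ((2ℓ+1)/(ℓ+1)) > 4 - 8/√k. -/
/-! Put `s = √k` and `t = 2ℓ + 1`, so that `s - 1 < t ≤ s + 1`. The two factors are
`2(1 - b)` with `b = t/(s² + t)` and `2(1 - a)` with `a = 1/(t + 1)`, and both `a` and `b` are
below `1/s`. Hence the product `4(1 - a)(1 - b) ≥ 4(1 - a - b)` exceeds `4 - 8/s`. -/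

lemma div_sq_add_lt_one_div {s t : ℝ} (hs : 0 < s) (ht : 0 ≤ t) (hts : t ≤ s + 1) :
    t / (s ^ 2 + t) < 1 / s := by
  rw [div_lt_div_iff₀ (by positivity) hs]
  rcases le_total s 1 with hs1 | hs1
  · nlinarith
  · nlinarith [mul_le_mul_of_nonneg_right hts (sub_nonneg.2 hs1)]

lemma one_div_add_one_lt_one_div {s t : ℝ} (hs : 0 < s) (hst : s - 1 < t) : 1 / (t + 1) < 1 / s :=
  one_div_lt_one_div_of_lt hs (by linarith)

theorem four_sub_lt_mul {s t : ℝ} (hs : 0 < s) (ht : 0 ≤ t) (hst : s - 1 < t)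
    (hts : t ≤ s + 1) :
    4 - 8 / s < (2 * s ^ 2 / (s ^ 2 + t)) * (2 * t / (t + 1)) := by
  have hb := div_sq_add_lt_one_div hs ht hts
  have ha := one_div_add_one_lt_one_div hs hst
  have hab : 0 ≤ t / (s ^ 2 + t) * (1 / (t + 1)) := by positivity
  have hfactors : (2 * s ^ 2 / (s ^ 2 + t)) * (2 * t / (t + 1)) =
      4 * ((1 - t / (s ^ 2 + t)) * (1 - 1 / (t + 1))) := by
    field_simp
    ring
  rw [hfactors]
  have h8 : 8 / s = 4 * (2 * (1 / s)) := by ring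
  nlinarith

/-- For every integer `k ≥ 4`, with `ℓ = ⌊√k / 2⌋`, one has
`(2k/(k+2ℓ+1))·((2ℓ+1)/(ℓ+1)) > 4 - 8/√k`. -/
theorem main_term_factor_lower_bound (k : ℕ) (hk : 4 ≤ k)
    (ℓ : ℕ) (hℓ : ℓ = ⌊Real.sqrt k / 2⌋₊) :
    (4 : ℝ) - 8 / Real.sqrt k <
      (2 * k / (k + 2 * ℓ + 1)) * ((2 * ℓ + 1) / (ℓ + 1)) := by
  set s := Real.sqrt k
  have hs : 0 < s := Real.sqrt_pos.mpr (by exact_mod_cast (by omega : 0 < k))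
  have hsq : s ^ 2 = k := Real.sq_sqrt k.cast_nonneg
  have hℓ_le : (ℓ : ℝ) ≤ s / 2 := hℓ ▸ Nat.floor_le (by positivity)
  have hℓ_gt : s / 2 < ℓ + 1 := hℓ ▸ Nat.lt_floor_add_one (s / 2)
  have hrewrite : (2 * k / (k + 2 * ℓ + 1)) * ((2 * ℓ + 1) / (ℓ + 1) : ℝ) =
      (2 * s ^ 2 / (s ^ 2 + (2 * ℓ + 1))) * (2 * (2 * ℓ + 1) / ((2 * ℓ + 1) + 1)) := by
    rw [hsq]
    field_simp
    ring
  rw [hrewrite]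
  exact four_sub_lt_mul hs (by positivity) (by linarith) (by linarith)
end

section
/- The function Λ_R(n; H, ℓ) := (1/(k+ℓ)!) ∑_{d | P_H(n), d ≤ R} μ(d) (log(R/d))^{k+ℓ} satisfies: if every prime factor of P_H(n) exceeds R^δ and each n + h_i ≤ 3N, then |Λ_R(n; H, ℓ)| ≤ 2^{k log(3N)/(δ log R)} · (log R)^{k+ℓ} / (k+ℓ)!. -/
/-
Only squarefree divisors `d` contribute, and for `1 ≤ d ≤ R` each term is at most `(log R)^(k+ℓ)`
in absolute value. The squarefree divisors of `P = P_H(n)` correspond to subsets of its prime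
factors, so there are at most `2^ω(P)` of them. Since every prime factor of `P` exceeds `R^δ`,
`R^(δ ω(P)) ≤ P ≤ (3N)^k`, i.e. `ω(P) ≤ k log(3N) / (δ log R)`.
-/

open scoped Classical

/-- The GPY prime tuple approximation
`Λ_R(n; H, ℓ) = (1/(k+ℓ)!) ∑_{d ∣ P_H(n), d ≤ R} μ(d) (log(R/d))^{k+ℓ}`. -/
noncomputable def LambdaR (R : ℝ) (n : ℕ) (H : Finset ℕ) (ℓ : ℕ) : ℝ :=
  (1 / (Nat.factorial (H.card + ℓ) : ℝ)) *
    ((∏ h ∈ H, (n + h)).divisors.filter (fun d : ℕ => (d : ℝ) ≤ R)).sum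
      (fun d : ℕ =>
        ((ArithmeticFunction.moebius d : ℤ) : ℝ) * (Real.log (R / d)) ^ (H.card + ℓ))

section

open Finset

theorem Nat.card_divisors_filter_squarefree_le {n : ℕ} (hn : n ≠ 0) :
    #{d ∈ n.divisors | Squarefree d} ≤ 2 ^ #n.primeFactors := by
  rw [← card_powerset]
  refine card_le_card_of_injOn Nat.primeFactors (fun d hd => ?_) (fun d₁ hd₁ d₂ hd₂ h => ?_)
  · simp only [coe_filter, Set.mem_ofPred_eq, mem_divisors] at hd
    exact mem_powerset.mpr (Nat.primeFactors_mono hd.1.1 hn)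
  · simp only [coe_filter, Set.mem_ofPred_eq] at hd₁ hd₂
    rw [← Nat.prod_primeFactors_of_squarefree hd₁.2, h, Nat.prod_primeFactors_of_squarefree hd₂.2]

theorem Nat.pow_card_primeFactors_le {n : ℕ} (hn : n ≠ 0) {B : ℝ} (hB : 0 ≤ B)
    (h : ∀ p ∈ n.primeFactors, B ≤ p) : B ^ #n.primeFactors ≤ n :=
  calc B ^ #n.primeFactors = ∏ _p ∈ n.primeFactors, B := (prod_const B).symm
    _ ≤ ∏ p ∈ n.primeFactors, (p : ℝ) := prod_le_prod (fun _ _ => hB) h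
    _ ≤ n := by
      rw [← Nat.cast_prod]
      exact_mod_cast Nat.le_of_dvd (Nat.pos_of_ne_zero hn) (Nat.prod_primeFactors_dvd n)

theorem Nat.card_primeFactors_le_log_div_log {n : ℕ} (hn : n ≠ 0) {B : ℝ} (hB : 1 < B)
    (h : ∀ p ∈ n.primeFactors, B ≤ p) : (#n.primeFactors : ℝ) ≤ Real.log n / Real.log B := by
  have hpow := Nat.pow_card_primeFactors_le hn (by linarith) h
  rw [le_div_iff₀ (Real.log_pos hB), ← Real.log_pow]
  exact Real.log_le_log (by positivity) hpow

theorem abs_sum_divisors_moebius_mul_le {n : ℕ} (hn : n ≠ 0) (p : ℕ → Prop) [DecidablePred p]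
    (g : ℕ → ℝ) {C : ℝ} (hC : 0 ≤ C) (hg : ∀ d ∈ n.divisors, p d → |g d| ≤ C) :
    |∑ d ∈ n.divisors with p d, (ArithmeticFunction.moebius d : ℝ) * g d| ≤
      2 ^ #n.primeFactors * C := by
  have hterm : ∀ d ∈ {d ∈ n.divisors | p d},
      |(ArithmeticFunction.moebius d : ℝ) * g d| ≤ if Squarefree d then C else 0 := by
    intro d hd
    rw [mem_filter] at hd
    split_ifs with hsq
    · rw [abs_mul]
      refine (mul_le_of_le_one_left (abs_nonneg _) ?_).trans (hg d hd.1 hd.2)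
      exact_mod_cast ArithmeticFunction.abs_moebius_le_one
    · simp [ArithmeticFunction.moebius_eq_zero_of_not_squarefree hsq]
  calc _ ≤ ∑ d ∈ n.divisors with p d, |(ArithmeticFunction.moebius d : ℝ) * g d| :=
        abs_sum_le_sum_abs _ _
    _ ≤ ∑ d ∈ n.divisors with p d, if Squarefree d then C else 0 := sum_le_sum hterm
    _ ≤ ∑ d ∈ n.divisors, if Squarefree d then C else 0 :=
        sum_le_sum_of_subset_of_nonneg (filter_subset _ _) fun _ _ _ => by positivity
    _ = #{d ∈ n.divisors | Squarefree d} * C := by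
        rw [sum_ite, sum_const_zero, sum_const, nsmul_eq_mul, add_zero]
    _ ≤ 2 ^ #n.primeFactors * C := by
        gcongr; exact_mod_cast Nat.card_divisors_filter_squarefree_le hn

theorem abs_log_div_pow_le {R d : ℝ} (hd : 1 ≤ d) (hdR : d ≤ R) (m : ℕ) :
    |Real.log (R / d) ^ m| ≤ Real.log R ^ m := by
  have hlog : 0 ≤ Real.log (R / d) := Real.log_nonneg ((one_le_div (by linarith)).mpr hdR)
  rw [abs_of_nonneg (pow_nonneg hlog m)]
  have hdiv : R / d ≤ R := div_le_self (by linarith) hd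
  exact pow_le_pow_left₀ hlog (Real.log_le_log (div_pos (by linarith) (by linarith)) hdiv) m

end

theorem LambdaR_bound_general (H : Finset ℕ) (k : ℕ) (hk : H.card = k)
    (ℓ : ℕ) (R : ℝ) (hR : 2 ≤ R)
    (δ : ℝ) (hδ0 : 0 < δ) (N : ℕ) (n : ℕ) (hn : 1 ≤ n)
    (hle : ∀ h ∈ H, n + h ≤ 3 * N)
    (hprimes : ∀ p : ℕ, p.Prime → p ∣ ∏ h ∈ H, (n + h) → R ^ δ < p) :
    |LambdaR R n H ℓ| ≤
      (2 : ℝ) ^ ((k : ℝ) * Real.log (3 * N) / (δ * Real.log R)) *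
        (Real.log R) ^ (k + ℓ) / (Nat.factorial (k + ℓ) : ℝ) := by
  set P := ∏ h ∈ H, (n + h)
  have hlogR : 0 < Real.log R := Real.log_pos (by linarith)
  have hP : P ≠ 0 := Finset.prod_ne_zero_iff.mpr fun h _ => by omega
  have hlogP : Real.log P ≤ k * Real.log (3 * N) := by
    have hP3N : (P : ℝ) ≤ (3 * N) ^ k := by exact_mod_cast hk ▸ Finset.prod_le_pow_card H _ _ hle
    rw [← Real.log_pow]
    exact Real.log_le_log (by positivity) hP3N
  have hω : (P.primeFactors.card : ℝ) ≤ k * Real.log (3 * N) / (δ * Real.log R) :=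
    calc (P.primeFactors.card : ℝ) ≤ Real.log P / Real.log (R ^ δ) :=
          Nat.card_primeFactors_le_log_div_log hP (Real.one_lt_rpow (by linarith) hδ0)
            fun p hp => (hprimes p (Nat.prime_of_mem_primeFactors hp)
              (Nat.dvd_of_mem_primeFactors hp)).le
      _ ≤ _ := by
          rw [Real.log_rpow (by linarith)]
          gcongr
  have hsum := abs_sum_divisors_moebius_mul_le hP (fun d : ℕ => (d : ℝ) ≤ R)
    (fun d => Real.log (R / d) ^ (k + ℓ)) (by positivity)
    fun d hd hdR => abs_log_div_pow_le (by exact_mod_cast Nat.pos_of_mem_divisors hd) hdR _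
  rw [LambdaR, hk, abs_mul, abs_of_nonneg (by positivity), one_div_mul_eq_div]
  gcongr
  refine hsum.trans (mul_le_mul_of_nonneg_right ?_ (by positivity))
  exact_mod_cast (Real.rpow_natCast 2 _).symm.trans_le
    (Real.rpow_le_rpow_of_exponent_le one_le_two hω)

/-- If every prime factor of `P_H(n)` exceeds `R^δ` and each `n + h ≤ 3N`, then
`|Λ_R(n; H, ℓ)| ≤ 2^{k log(3N)/(δ log R)}·(log R)^{k+ℓ}/(k+ℓ)!`. -/
theorem LambdaR_bound (H : Finset ℕ) (k : ℕ) (hk : H.card = k)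
    (hpos : ∀ h ∈ H, 1 ≤ h) (ℓ : ℕ) (hℓ : ℓ < k) (R : ℝ) (hR : 2 ≤ R)
    (δ : ℝ) (hδ0 : 0 < δ) (hδ1 : δ < 1) (N : ℕ) (hN : 1 ≤ N) (n : ℕ) (hn : 1 ≤ n)
    (hle : ∀ h ∈ H, n + h ≤ 3 * N)
    (hprimes : ∀ p : ℕ, p.Prime → p ∣ ∏ h ∈ H, (n + h) → R ^ δ < p) :
    |LambdaR R n H ℓ| ≤
      (2 : ℝ) ^ ((k : ℝ) * Real.log (3 * N) / (δ * Real.log R)) *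
        (Real.log R) ^ (k + ℓ) / (Nat.factorial (k + ℓ) : ℝ) :=
  LambdaR_bound_general H k hk ℓ R hR δ hδ0 N n hn hle hprimes
end
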